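/- The series ∑_{k=2}^∞ (ζ(k) − 1)/k converges and equals 1 − γ, where γ is the Euler–Mascheroni constant (Euler's formula). -/

import Mathlib

/-!
Write `ζ(k) - 1 = ∑_{n ≥ 2} n⁻ᵏ` and sum the nonnegative double series `∑_{n, k ≥ 2} n⁻ᵏ / k`
in the other order: by the power series of the logarithm the inner sum over `k` is
`log n - log (n - 1) - 1/n`, and the partial sums of these telescope to `1 - (H_N - log N)`,
which tends to `1 - γ`.
-/

/-- The Riemann zeta function at a natural argument, `ζ(s) = ∑_{n=1}^∞ 1/n^s`. -/
noncomputable def zetaNat (s : ℕ) : ℝ := ∑' n : ℕ, 1 / ((n : ℝ) + 1) ^ s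

open Filter Real Finset

theorem HasSum.prod_of_nonneg {β γ : Type*} {f : β × γ → ℝ} (hf : 0 ≤ f) {g : β → ℝ} {a : ℝ}
    (hfg : ∀ b, HasSum (fun c => f (b, c)) (g b)) (hg : HasSum g a) : HasSum f a := by
  have hsum : Summable f :=
    (summable_prod_of_nonneg hf).2
      ⟨fun b => (hfg b).summable, hg.summable.congr fun b => ((hfg b).tsum_eq).symm⟩
  rw [← (hsum.hasSum.prod_fiberwise hfg).unique hg]
  exact hsum.hasSum

theorem hasSum_pow_add_two_div {x : ℝ} (hx : |x| < 1) :
    HasSum (fun k : ℕ => x ^ (k + 2) / ((k : ℝ) + 2)) (-log (1 - x) - x) := by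
  have h := (hasSum_nat_add_iff' 1).2 (hasSum_pow_div_log_of_abs_lt_one hx)
  simp only [range_one, sum_singleton, Nat.cast_zero, zero_add, pow_one, div_one] at h
  refine h.congr_fun fun k => ?_
  push_cast
  ring

theorem hasSum_one_div_add_two_pow (n : ℕ) :
    HasSum (fun k : ℕ => (1 / ((n : ℝ) + 2)) ^ (k + 2) / ((k : ℝ) + 2))
      (log ((n : ℝ) + 2) - log ((n : ℝ) + 1) - 1 / ((n : ℝ) + 2)) := by
  have hx : |1 / ((n : ℝ) + 2)| < 1 := by
    rw [abs_of_pos (by positivity), div_lt_one (by positivity)]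
    linarith [n.cast_nonneg (α := ℝ)]
  have hlog : -log (1 - 1 / ((n : ℝ) + 2)) = log ((n : ℝ) + 2) - log ((n : ℝ) + 1) := by
    rw [show 1 - 1 / ((n : ℝ) + 2) = ((n : ℝ) + 1) / ((n : ℝ) + 2) by field_simp; ring,
      log_div (by positivity) (by positivity)]
    ring
  simpa only [hlog] using hasSum_pow_add_two_div hx

theorem sum_range_log_sub_log_sub_one_div (N : ℕ) :
    ∑ n ∈ range N, (log ((n : ℝ) + 2) - log ((n : ℝ) + 1) - 1 / ((n : ℝ) + 2))
      = 1 - ((harmonic (N + 1) : ℝ) - log ((N : ℝ) + 1)) := by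
  have hlog : ∑ n ∈ range N, (log ((n : ℝ) + 2) - log ((n : ℝ) + 1)) = log ((N : ℝ) + 1) := by
    have h := sum_range_sub (fun i : ℕ => log ((i : ℝ) + 1)) N
    simp only [Nat.cast_add_one, Nat.cast_zero, zero_add, log_one, sub_zero] at h
    rw [← h]
    exact sum_congr rfl fun i _ => by ring_nf
  have hharm : (harmonic (N + 1) : ℝ) = 1 + ∑ n ∈ range N, 1 / ((n : ℝ) + 2) := by
    rw [harmonic, sum_range_succ']
    push_cast
    ring_nf
  rw [sum_sub_distrib, hlog, hharm]
  ring

theorem hasSum_log_sub_log_sub_one_div :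
    HasSum (fun n : ℕ => log ((n : ℝ) + 2) - log ((n : ℝ) + 1) - 1 / ((n : ℝ) + 2))
      (1 - eulerMascheroniConstant) := by
  have hnonneg (n : ℕ) : 0 ≤ log ((n : ℝ) + 2) - log ((n : ℝ) + 1) - 1 / ((n : ℝ) + 2) :=
    (hasSum_one_div_add_two_pow n).nonneg fun k => by positivity
  rw [hasSum_iff_tendsto_nat_of_nonneg hnonneg]
  simp only [sum_range_log_sub_log_sub_one_div]
  refine tendsto_const_nhds.sub ?_
  convert tendsto_harmonic_sub_log.comp (tendsto_add_atTop_nat 1) using 2 with N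
  simp

theorem hasSum_zetaNat_sub_one {s : ℕ} (hs : 1 < s) :
    HasSum (fun n : ℕ => (1 / ((n : ℝ) + 2)) ^ s) (zetaNat s - 1) := by
  have hsum : Summable fun n : ℕ => 1 / ((n : ℝ) + 1) ^ s := by
    have h := (summable_nat_add_iff 1).2 (summable_one_div_nat_pow.2 hs)
    simpa only [Nat.cast_add_one] using h
  have h := (hasSum_nat_add_iff' 1).2 hsum.hasSum
  simp only [range_one, sum_singleton, Nat.cast_zero, zero_add, one_pow, div_one] at h
  refine h.congr_fun fun n => ?_
  rw [one_div_pow]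
  push_cast
  ring

/-- Euler's formula: `∑_{k=2}^∞ (ζ(k) − 1)/k = 1 − γ`. -/
theorem euler_formula :
    HasSum (fun k : ℕ => (zetaNat (k + 2) - 1) / ((k : ℝ) + 2))
      (1 - Real.eulerMascheroniConstant) := by
  have hdouble : HasSum (fun p : ℕ × ℕ => (1 / ((p.1 : ℝ) + 2)) ^ (p.2 + 2) / ((p.2 : ℝ) + 2))
      (1 - eulerMascheroniConstant) :=
    .prod_of_nonneg (fun p => by positivity) hasSum_one_div_add_two_pow
      hasSum_log_sub_log_sub_one_div
  exact ((Equiv.prodComm ℕ ℕ).hasSum_iff.2 hdouble).prod_fiberwise fun k =>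
    (hasSum_zetaNat_sub_one (by omega)).div_const _
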